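/- arXiv:1410.7357 — 3 statements merged into one kernel-verified Lean document; each statement's English description precedes it below -/
import Mathlib

section
/- Let g be a finite simple graph on ordered vertices v_1, …, v_n and let s_1 ≤ … ≤ s_n be a nondecreasing sequence of nonnegative integers satisfying Condition 1, i.e., for all i ∈ [n]: (i) v_i has at least s_i neighbors v_j with s_j ≥ s_i, and (ii) v_i has at most s_i neighbors v_j with j > i. Then the shell index of each vertex satisfies s(v_i) = s_i for all i ∈ [n]. -/
/-- `MinDegGE G k S`: the subgraph of `G` induced on the vertex set `S` has minimum
degree at least `k`, i.e. every vertex of `S` has at least `k` neighbors inside `S`. -/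
def MinDegGE {V : Type*} (G : SimpleGraph V) (k : ℕ) (S : Set V) : Prop :=
  ∀ v ∈ S, k ≤ Nat.card {w : V // G.Adj v w ∧ w ∈ S}

/-- The vertex set of the `k`-core of `G`: the union of all vertex subsets inducing a
subgraph of minimum degree at least `k`. -/
def coreVerts {V : Type*} (G : SimpleGraph V) (k : ℕ) : Set V :=
  {v | ∃ S : Set V, MinDegGE G k S ∧ v ∈ S}

/-- The shell index of `v`: the largest `k` such that `v` belongs to the `k`-core. -/
noncomputable def shellIndex {V : Type*} (G : SimpleGraph V) (v : V) : ℕ :=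
  sSup {k : ℕ | v ∈ coreVerts G k}

/-- `n_j(g)`: the number of vertices of `G` with shell index `j`. -/
noncomputable def shellCount {V : Type*} (G : SimpleGraph V) (j : ℕ) : ℕ :=
  Nat.card {v : V // shellIndex G v = j}

/-!
Let `S_k = {v | k ≤ s v}`. Condition (i) says every vertex of `S_{s i}` has at least `s i`
neighbours inside it, so `v_i` lies in the `s i`-core. Conversely, in any vertex set `S` of
minimum degree `k` containing `v_i`, the smallest vertex `m` of `S` has all its `S`-neighbours
above it, so `k ≤ s m ≤ s i` by condition (ii) and monotonicity.
-/

section CoreBounds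

variable {V : Type*} [Finite V] (G : SimpleGraph V)

theorem minDegGE_setOf_le {s : V → ℕ}
    (h1 : ∀ v, s v ≤ Nat.card {w // G.Adj v w ∧ s v ≤ s w}) (k : ℕ) :
    MinDegGE G k {v | k ≤ s v} := fun v hv =>
  calc k ≤ s v := hv
    _ ≤ Nat.card {w // G.Adj v w ∧ s v ≤ s w} := h1 v
    _ ≤ Nat.card {w // G.Adj v w ∧ k ≤ s w} :=
        Nat.card_mono (Set.toFinite _) fun _ ⟨hadj, hw⟩ => ⟨hadj, hv.trans hw⟩

theorem mem_coreVerts_of_le_card_adj_le {s : V → ℕ}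
    (h1 : ∀ v, s v ≤ Nat.card {w // G.Adj v w ∧ s v ≤ s w}) (v : V) :
    v ∈ coreVerts G (s v) :=
  ⟨_, minDegGE_setOf_le G h1 (s v), le_refl (s v)⟩

variable [LinearOrder V]

theorem MinDegGE.le_card_adj_gt_of_isLeast {k : ℕ} {S : Set V} {m : V}
    (hS : MinDegGE G k S) (hm : IsLeast S m) :
    k ≤ Nat.card {w // G.Adj m w ∧ m < w} :=
  calc k ≤ Nat.card {w // G.Adj m w ∧ w ∈ S} := hS m hm.1
    _ ≤ Nat.card {w // G.Adj m w ∧ m < w} :=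
        Nat.card_mono (Set.toFinite _) fun _ ⟨hadj, hw⟩ =>
          ⟨hadj, (hm.2 hw).lt_of_ne (G.ne_of_adj hadj)⟩

theorem le_of_mem_coreVerts {s : V → ℕ} (hmono : Monotone s)
    (h2 : ∀ v, Nat.card {w // G.Adj v w ∧ v < w} ≤ s v) {k : ℕ} {v : V}
    (hv : v ∈ coreVerts G k) : k ≤ s v := by
  obtain ⟨S, hS, hvS⟩ := hv
  obtain ⟨m, hm⟩ : ∃ m, IsLeast S m := by
    obtain ⟨m, hmin⟩ := (Set.toFinite S).exists_minimal ⟨v, hvS⟩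
    exact ⟨m, hmin.prop, fun w hw => not_lt.mp fun hwm => hmin.not_lt hw hwm⟩
  calc k ≤ Nat.card {w // G.Adj m w ∧ m < w} := hS.le_card_adj_gt_of_isLeast G hm
    _ ≤ s m := h2 m
    _ ≤ s v := hmono (hm.2 hvS)

end CoreBounds

/-- If `g` is a graph on ordered vertices `v_1, …, v_n` and
`s_1 ≤ … ≤ s_n` is a nondecreasing sequence of nonnegative integers satisfying
Condition 1 — (i) each `v_i` has at least `s_i` neighbors `v_j` with `s_j ≥ s_i`, and
(ii) each `v_i` has at most `s_i` neighbors `v_j` with `j > i` — then the shell index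
of each vertex `v_i` equals `s_i`. -/
theorem shellIndex_eq_of_condition_one {n : ℕ} (G : SimpleGraph (Fin n))
    (s : Fin n → ℕ) (hmono : Monotone s)
    (h1 : ∀ i : Fin n, s i ≤ Nat.card {j : Fin n // G.Adj i j ∧ s i ≤ s j})
    (h2 : ∀ i : Fin n, Nat.card {j : Fin n // G.Adj i j ∧ i < j} ≤ s i) :
    ∀ i : Fin n, shellIndex G i = s i := fun i =>
  IsGreatest.csSup_eq
    ⟨mem_coreVerts_of_le_card_adj_le G h1 i, fun _ hk => le_of_mem_coreVerts G hmono h2 hk⟩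
end

section
/- Let n ≥ 1 and let (n_0, n_1, …, n_{n-1}) be a vector of nonnegative integers with Σ_{j=0}^{n-1} n_j = n. Let m be the largest index j with n_j > 0, and suppose n_m ≥ m + 1. Then there exists a simple graph g on n vertices whose shell distribution is exactly (n_0, n_1, …, n_{n-1}), i.e., for every j, the number of vertices of g with shell index j equals n_j. -/
/-! The shell index of every vertex can be prescribed, subject only to the constraint that the
top shell `m` contain at least `m + 1` vertices: take `m + 1` vertices of the top shell as a
clique `K`, and join every other vertex `v` to exactly `σ v ≤ m` vertices of `K` and to nothing
else. The set `K ∪ {v}` shows that `v` lies in the `σ v`-core. Conversely, a vertex outside `K`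
has only `σ v` neighbours, so a set of minimum degree `k` containing one has `k ≤ σ v ≤ m`,
while a set of minimum degree `k` inside `K` has `k ≤ |K| - 1 = m`. -/

open Set

section Cores

variable {V : Type*} {G : SimpleGraph V}

theorem shellIndex_eq_of_isGreatest {v : V} {k : ℕ} (hv : v ∈ coreVerts G k)
    (hk : ∀ k', v ∈ coreVerts G k' → k' ≤ k) : shellIndex G v = k :=
  IsGreatest.csSup_eq ⟨hv, hk⟩

theorem MinDegGE.le_ncard [Finite V] {k : ℕ} {S T : Set V} (hS : MinDegGE G k S) {u : V}
    (hu : u ∈ S) (hT : ∀ w ∈ S, G.Adj u w → w ∈ T) : k ≤ T.ncard :=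
  (hS u hu).trans (ncard_le_ncard fun w hw => hT w hw.2 hw.1)

theorem le_card_adj_of_subset [Finite V] {k : ℕ} {S T : Set V} {u : V}
    (hT : T ⊆ {w | G.Adj u w ∧ w ∈ S}) (hk : k ≤ T.ncard) :
    k ≤ Nat.card {w // G.Adj u w ∧ w ∈ S} :=
  hk.trans (ncard_le_ncard hT)

end Cores

section CliqueAttach

variable {V : Type*} (K : Set V) (N : V → Set V)

def cliqueAttach : SimpleGraph V :=
  SimpleGraph.fromRel fun u w => (u ∈ K ∧ w ∈ K) ∨ (u ∉ K ∧ w ∈ N u)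

variable {K N}

theorem cliqueAttach_adj_of_mem {u w : V} (hu : u ∈ K) (hw : w ∈ K) (huw : u ≠ w) :
    (cliqueAttach K N).Adj u w :=
  (SimpleGraph.fromRel_adj _ u w).2 ⟨huw, Or.inl (Or.inl ⟨hu, hw⟩)⟩

theorem cliqueAttach_adj_iff_of_notMem (hN : ∀ v, N v ⊆ K) {u w : V} (hu : u ∉ K) :
    (cliqueAttach K N).Adj u w ↔ w ∈ N u := by
  simp only [cliqueAttach, SimpleGraph.fromRel_adj]
  constructor
  · rintro ⟨-, (⟨h, -⟩ | ⟨-, hw⟩) | (⟨-, h⟩ | ⟨-, h⟩)⟩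
    exacts [absurd h hu, hw, absurd h hu, absurd (hN w h) hu]
  · intro hw
    exact ⟨fun h => hu (h ▸ hN u hw), Or.inl (Or.inr ⟨hu, hw⟩)⟩

variable [Finite V] {σ : V → ℕ} {m : ℕ} (hK : K.ncard = m + 1) (hσK : ∀ v ∈ K, σ v = m)
  (hσ : ∀ v, σ v ≤ m) (hN : ∀ v, N v ⊆ K) (hNσ : ∀ v ∉ K, (N v).ncard = σ v)
include hK hσ hN hNσ

theorem mem_coreVerts_cliqueAttach (v : V) : v ∈ coreVerts (cliqueAttach K N) (σ v) := by
  refine ⟨insert v K, fun u hu => ?_, mem_insert v K⟩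
  by_cases huK : u ∈ K
  · refine le_card_adj_of_subset (T := K \ {u}) (fun w hw => ?_) ?_
    · exact ⟨cliqueAttach_adj_of_mem huK hw.1 (Ne.symm hw.2), mem_insert_of_mem v hw.1⟩
    · rw [ncard_sdiff_singleton_of_mem huK, hK]
      exact hσ v
  · obtain rfl : u = v := (mem_insert_iff.1 hu).resolve_right huK
    refine le_card_adj_of_subset (T := N u) (fun w hw => ?_) (hNσ u huK).ge
    exact ⟨(cliqueAttach_adj_iff_of_notMem hN huK).2 hw, mem_insert_of_mem u (hN u hw)⟩

include hσK in
theorem le_of_mem_coreVerts_cliqueAttach {v : V} {k : ℕ}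
    (hv : v ∈ coreVerts (cliqueAttach K N) k) : k ≤ σ v := by
  obtain ⟨S, hS, hvS⟩ := hv
  have h_out : ∀ u ∈ S, u ∉ K → k ≤ σ u := fun u hu huK =>
    hNσ u huK ▸ hS.le_ncard hu fun w _ hw => (cliqueAttach_adj_iff_of_notMem hN huK).1 hw
  by_cases hvK : v ∈ K
  · rw [hσK v hvK]
    by_cases hSK : S ⊆ K
    · calc k ≤ (K \ {v}).ncard := hS.le_ncard hvS fun w hw hvw => ⟨hSK hw, hvw.ne.symm⟩
        _ = m := by rw [ncard_sdiff_singleton_of_mem hvK, hK, Nat.add_sub_cancel]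
    · obtain ⟨u, huS, huK⟩ := not_subset.1 hSK
      exact (h_out u huS huK).trans (hσ u)
  · exact h_out v hvS hvK

include hσK in
theorem shellIndex_cliqueAttach (v : V) : shellIndex (cliqueAttach K N) v = σ v :=
  shellIndex_eq_of_isGreatest (mem_coreVerts_cliqueAttach hK hσ hN hNσ v)
    fun _ => le_of_mem_coreVerts_cliqueAttach hK hσK hσ hN hNσ

end CliqueAttach

theorem exists_shellIndex_eq {V : Type*} [Finite V] (σ : V → ℕ) (m : ℕ) (hσ : ∀ v, σ v ≤ m)
    (hm : m + 1 ≤ Nat.card {v // σ v = m}) : ∃ G : SimpleGraph V, ∀ v, shellIndex G v = σ v := by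
  obtain ⟨K, hKm, hK⟩ := exists_subset_card_eq (s := {v | σ v = m}) hm
  have hN : ∀ v, ∃ T ⊆ K, T.ncard = σ v := fun v =>
    exists_subset_card_eq (hK ▸ (hσ v).trans m.le_succ)
  choose N hNK hNσ using hN
  exact ⟨cliqueAttach K N, shellIndex_cliqueAttach hK hKm hσ hNK fun v _ => hNσ v⟩

theorem exists_card_fiber_eq {ι V : Type*} [Fintype ι] [Finite V] (c : ι → ℕ)
    (hc : Nat.card V = ∑ i, c i) : ∃ f : V → ι, ∀ i, Nat.card {v // f v = i} = c i := by
  obtain ⟨e⟩ : Nonempty (V ≃ Σ i, Fin (c i)) := Finite.card_eq.1 (by simp [hc])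
  refine ⟨fun v => (e v).1, fun i => ?_⟩
  rw [Nat.card_congr ((e.subtypeEquiv fun _ => Iff.rfl).trans (Equiv.sigmaSubtype i))]
  simp

theorem shell_distribution_realizable_general {n : ℕ} (c : Fin n → ℕ)
    (hsum : ∑ j, c j = n) (m : Fin n) (hm : IsGreatest {j : Fin n | 0 < c j} m)
    (hcm : (m : ℕ) + 1 ≤ c m) :
    ∃ G : SimpleGraph (Fin n), ∀ j : Fin n, shellCount G (j : ℕ) = c j := by
  obtain ⟨f, hf⟩ := exists_card_fiber_eq (V := Fin n) c (by simp [hsum])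
  have hfm : ∀ v, (f v : ℕ) ≤ m := fun v =>
    hm.2 (show 0 < c (f v) from hf (f v) ▸ Nat.card_pos_iff.2 ⟨⟨⟨v, rfl⟩⟩, inferInstance⟩)
  obtain ⟨G, hG⟩ := exists_shellIndex_eq (fun v => (f v : ℕ)) m hfm
    (by simpa only [Fin.val_inj, hf] using hcm)
  refine ⟨G, fun j => ?_⟩
  simpa only [shellCount, hG, Fin.val_inj] using hf j

/-- Let `n ≥ 1` and let `(n_0, …, n_{n-1})` be nonnegative integers
summing to `n`. If `m` is the largest index with `n_m > 0` and `n_m ≥ m + 1`, then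
there is a simple graph on `n` vertices whose shell distribution is exactly
`(n_0, …, n_{n-1})`. -/
theorem shell_distribution_realizable {n : ℕ} (hn : 1 ≤ n) (c : Fin n → ℕ)
    (hsum : ∑ j, c j = n) (m : Fin n) (hm : IsGreatest {j : Fin n | 0 < c j} m)
    (hcm : (m : ℕ) + 1 ≤ c m) :
    ∃ G : SimpleGraph (Fin n), ∀ j : Fin n, shellCount G (j : ℕ) = c j :=
  shell_distribution_realizable_general c hsum m hm hcm
end

section
/- Let n ≥ 2 and let g be any simple graph on n vertices. Then there exists an index j ∈ {0, 1, …, n-1} such that n_j(g) = 0; that is, every realizable shell distribution on n ≥ 2 vertices has a zero coordinate. -/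
/-!
If no vertex has shell index `n - 1` we are done. Otherwise some vertex lies in a set `S`
inducing minimum degree at least `n - 1`; the vertex and its `n - 1` neighbours in `S` fill
all of `V`, so `S = V` and every vertex has shell index `n - 1 ≥ 1`, leaving `n_0 = 0`.
-/

section

variable {V : Type*} (G : SimpleGraph V)

theorem mem_coreVerts_zero (v : V) : v ∈ coreVerts G 0 :=
  ⟨Set.univ, fun _ _ => Nat.zero_le _, Set.mem_univ v⟩

theorem MinDegGE.lt_ncard [Finite V] {k : ℕ} {S : Set V} (hS : MinDegGE G k S) {v : V}
    (hv : v ∈ S) : k < S.ncard := by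
  have hnbrs : v ∉ {w | G.Adj v w ∧ w ∈ S} := fun h => G.loopless.irrefl v h.1
  have hsub : insert v {w | G.Adj v w ∧ w ∈ S} ⊆ S := Set.insert_subset hv fun _ hw => hw.2
  calc k ≤ {w | G.Adj v w ∧ w ∈ S}.ncard := (Nat.card_coe_set_eq _).symm ▸ hS v hv
    _ < (insert v {w | G.Adj v w ∧ w ∈ S}).ncard := by
      rw [Set.ncard_insert_of_notMem hnbrs]; exact Nat.lt_succ_self _
    _ ≤ S.ncard := Set.ncard_le_ncard hsub

theorem MinDegGE.eq_univ [Finite V] {S : Set V} (hS : MinDegGE G (Nat.card V - 1) S) {v : V}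
    (hv : v ∈ S) : S = Set.univ := by
  have hlt := hS.lt_ncard G hv
  exact Set.eq_of_subset_of_ncard_le (Set.subset_univ S) (by rw [Set.ncard_univ]; omega)

theorem lt_card_of_mem_coreVerts [Finite V] {k : ℕ} {v : V} (h : v ∈ coreVerts G k) :
    k < Nat.card V := by
  obtain ⟨S, hS, hv⟩ := h
  exact (hS.lt_ncard G hv).trans_le (Set.ncard_le_card S)

theorem bddAbove_coreVerts_index [Finite V] (v : V) : BddAbove {k | v ∈ coreVerts G k} :=
  ⟨Nat.card V, fun _ hk => (lt_card_of_mem_coreVerts G hk).le⟩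

theorem mem_coreVerts_shellIndex [Finite V] (v : V) : v ∈ coreVerts G (shellIndex G v) :=
  Nat.sSup_mem ⟨0, mem_coreVerts_zero G v⟩ (bddAbove_coreVerts_index G v)

theorem le_shellIndex [Finite V] {k : ℕ} {v : V} (h : v ∈ coreVerts G k) : k ≤ shellIndex G v :=
  le_csSup (bddAbove_coreVerts_index G v) h

theorem shellIndex_lt_card [Finite V] (v : V) : shellIndex G v < Nat.card V :=
  lt_card_of_mem_coreVerts G (mem_coreVerts_shellIndex G v)

theorem shellIndex_eq_card_sub_one [Finite V] {v : V} (hv : shellIndex G v = Nat.card V - 1)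
    (u : V) : shellIndex G u = Nat.card V - 1 := by
  obtain ⟨S, hS, hvS⟩ := hv ▸ mem_coreVerts_shellIndex G v
  have hu : u ∈ coreVerts G (Nat.card V - 1) := ⟨S, hS, hS.eq_univ G hvS ▸ Set.mem_univ u⟩
  have := shellIndex_lt_card G u
  have := le_shellIndex G hu
  omega

theorem shellCount_eq_zero_iff [Finite V] (j : ℕ) :
    shellCount G j = 0 ↔ ∀ v, shellIndex G v ≠ j := by
  simp [shellCount, Nat.card_eq_zero, isEmpty_subtype, not_infinite_iff_finite, Subtype.finite]

end

/-- For every simple graph `g` on `n ≥ 2` vertices there is an index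
`j ∈ {0, …, n-1}` with `n_j(g) = 0`: every realizable shell distribution on at least
two vertices has a zero coordinate. -/
theorem shell_distribution_has_zero_coordinate {V : Type*} [Fintype V]
    (hn : 2 ≤ Fintype.card V) (G : SimpleGraph V) :
    ∃ j : ℕ, j < Fintype.card V ∧ shellCount G j = 0 := by
  rw [← Nat.card_eq_fintype_card] at hn ⊢
  by_cases h : ∃ v, shellIndex G v = Nat.card V - 1
  · obtain ⟨v, hv⟩ := h
    refine ⟨0, by omega, (shellCount_eq_zero_iff G 0).2 fun u hu => ?_⟩
    have := shellIndex_eq_card_sub_one G hv u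
    omega
  · push Not at h
    exact ⟨Nat.card V - 1, by omega, (shellCount_eq_zero_iff G _).2 h⟩
end
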